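/- Let G be a connected graph containing a vertex i which is incident with at least 3 nontrivial bridges of G (i.e., bn(i) ≥ 3). Then the square G² is not hamiltonian. -/

import Mathlib

open SimpleGraph Function

variable {V : Type*}

/-- The square of a graph `G`: two distinct vertices are adjacent iff their distance
in `G` is at most 2, i.e. they are adjacent in `G` or have a common neighbor. -/
def GraphSquare (G : SimpleGraph V) : SimpleGraph V where
  Adj u v := u ≠ v ∧ (G.Adj u v ∨ ∃ w, G.Adj u w ∧ G.Adj w v)
  symm := ⟨by
    rintro u v ⟨hne, h | ⟨w, h1, h2⟩⟩
    · exact ⟨hne.symm, Or.inl h.symm⟩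
    · exact ⟨hne.symm, Or.inr ⟨w, h2.symm, h1.symm⟩⟩⟩
  loopless := ⟨fun v h => h.1 rfl⟩

/-- A leaf of `G` is a vertex with exactly one neighbor. -/
def IsLeafVertex (G : SimpleGraph V) (v : V) : Prop := ∃! w, G.Adj v w

/-- A nontrivial bridge of `G` is a bridge neither of whose endpoints is a leaf. -/
def IsNontrivialBridge (G : SimpleGraph V) (x y : V) : Prop :=
  G.IsBridge s(x, y) ∧ ¬ IsLeafVertex G x ∧ ¬ IsLeafVertex G y

/-- `bn G i` is the number of nontrivial bridges of `G` incident with `i`. -/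
noncomputable def bn (G : SimpleGraph V) (i : V) : ℕ :=
  {v : V | IsNontrivialBridge G i v}.ncard

/-- A cutvertex of a connected graph is a vertex whose removal disconnects the graph. -/
def IsCutVertex (G : SimpleGraph V) (v : V) : Prop :=
  G.Connected ∧ ({u : V | u ≠ v}).Nonempty ∧ ¬ (G.induce {u : V | u ≠ v}).Connected

/-- A block of `G`: a maximal set of vertices inducing a connected subgraph
without a cutvertex of its own. -/
def IsBlock (G : SimpleGraph V) (B : Set V) : Prop :=
  (G.induce B).Connected ∧ (∀ v, ¬ IsCutVertex (G.induce B) v) ∧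
    ∀ C : Set V, B ⊆ C → (G.induce C).Connected →
      (∀ v, ¬ IsCutVertex (G.induce C) v) → C = B

/-- A 2-block of `G`: a block with more than two vertices. -/
def Is2Block (G : SimpleGraph V) (B : Set V) : Prop :=
  IsBlock G B ∧ 2 < B.ncard

/-- The number `k_i` of 2-blocks of `G` containing `i`. -/
noncomputable def numTwoBlocksAt (G : SimpleGraph V) (i : V) : ℕ :=
  {B : Set V | Is2Block G B ∧ i ∈ B}.ncard

/-- The set of cutvertices of `G`. -/
def cutvertexSet (G : SimpleGraph V) : Set V := {v | IsCutVertex G v}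

/-- The block-cutvertex graph of `G`: the bipartite graph on the blocks and the
cutvertices of `G`, a block being adjacent to a cutvertex exactly when the
cutvertex belongs to the block. -/
def bcGraph (G : SimpleGraph V) :
    SimpleGraph ({B : Set V // IsBlock G B} ⊕ {v : V // IsCutVertex G v}) where
  Adj a b := ∃ B v, v.1 ∈ B.1 ∧
      ((a = Sum.inl B ∧ b = Sum.inr v) ∨ (a = Sum.inr v ∧ b = Sum.inl B))
  symm := ⟨by
    rintro a b ⟨B, v, hv, (⟨rfl, rfl⟩ | ⟨rfl, rfl⟩)⟩
    · exact ⟨B, v, hv, Or.inr ⟨rfl, rfl⟩⟩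
    · exact ⟨B, v, hv, Or.inl ⟨rfl, rfl⟩⟩⟩
  loopless := ⟨by
    rintro a ⟨B, v, hv, (⟨rfl, h⟩ | ⟨rfl, h⟩)⟩ <;> simp at h⟩

/-- A graph is hamiltonian if it contains a hamiltonian cycle. -/
def HasHamiltonianCycle (H : SimpleGraph V) : Prop :=
  letI : DecidableEq V := Classical.decEq V
  ∃ (a : V) (c : H.Walk a a), c.IsHamiltonianCycle

/-- There is a hamiltonian path from `x` to `y` in `H`. -/
def HasHamiltonianPath (H : SimpleGraph V) (x y : V) : Prop :=
  letI : DecidableEq V := Classical.decEq V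
  ∃ p : H.Walk x y, p.IsHamiltonian

/-- A graph is hamiltonian connected if any two distinct vertices are joined by a
hamiltonian path. -/
def HamiltonianConnected (H : SimpleGraph V) : Prop :=
  ∀ u v : V, u ≠ v → HasHamiltonianPath H u v

/-- A 2-connected graph (equivalently, a "2-block" regarded as a graph on its own):
a connected graph on at least three vertices without a cutvertex. -/
def IsTwoConnectedGraph [Fintype V] (G : SimpleGraph V) : Prop :=
  3 ≤ Fintype.card V ∧ G.Connected ∧ ∀ v, ¬ IsCutVertex G v

/-- A graph `H` on `n` vertices is panconnected if for every pair of distinct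
vertices `u`, `v` and every `l` with `dist u v ≤ l ≤ n - 1` there is a `u`-`v`
path of length exactly `l`. -/
def Panconnected [Fintype V] (H : SimpleGraph V) : Prop :=
  ∀ u v : V, u ≠ v → ∀ l : ℕ, H.dist u v ≤ l → l ≤ Fintype.card V - 1 →
    ∃ p : H.Walk u v, p.IsPath ∧ p.length = l

/-- A graph `H` on `n` vertices is vertex-pancyclic if every vertex lies on a cycle
of length `l` for every `3 ≤ l ≤ n`. -/
def VertexPancyclic [Fintype V] (H : SimpleGraph V) : Prop :=
  ∀ v : V, ∀ l : ℕ, 3 ≤ l → l ≤ Fintype.card V →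
    ∃ c : H.Walk v v, c.IsCycle ∧ c.length = l

/-- A caterpillar: a tree in which every vertex is within distance 1 of a spine path. -/
def IsCaterpillar (T : SimpleGraph V) : Prop :=
  T.IsTree ∧ ∃ (u v : V) (P : T.Walk u v), P.IsPath ∧
    ∀ w : V, w ∈ P.support ∨ ∃ z ∈ P.support, T.Adj w z

/-- An innerblock of `G`: a block which is not an endblock, i.e. a block containing
at least two cutvertices of `G`. -/
def IsInnerBlock (G : SimpleGraph V) (B : Set V) : Prop :=
  IsBlock G B ∧ 2 ≤ {i : V | IsCutVertex G i ∧ i ∈ B}.ncard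

/-- A block-chain: a connected graph whose block-cutvertex graph is a path. -/
def IsBlockChain (G : SimpleGraph V) : Prop :=
  G.Connected ∧ ∃ n : ℕ, Nonempty (bcGraph G ≃g pathGraph n)

/-! For a nontrivial bridge `iv`, let `S_v` be the side of `G - iv` containing `v`. An edge of `G²`
leaving `S_v` starts at `v` or ends at `i`. As `v` is not a leaf, `S_v` contains a vertex other than
`v`, so a hamiltonian cycle of `G²` cannot pass through `S_v` via `v` alone and must use an edge
from `i` into `S_v`. The sides of distinct bridges at `i` are disjoint, so three nontrivial bridges
would give `i` three neighbours on the cycle. -/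

lemma HasHamiltonianCycle.exists_isCycle {H : SimpleGraph V} (hH : HasHamiltonianCycle H) (i : V) :
    ∃ c : H.Walk i i, c.IsCycle ∧ ∀ w, w ∈ c.support := by
  classical
  obtain ⟨a, c, hc⟩ := hH
  have hci := hc.rotate (hc.mem_support i)
  exact ⟨_, hci.isCycle, hci.mem_support⟩

namespace SimpleGraph

variable {G H : SimpleGraph V} {i v x y : V}

/-- When `s(i, v)` is a bridge, the side of `G - iv` containing `v`. -/
def farSide (G : SimpleGraph V) (i v : V) : Set V :=
  {x | ¬ (G.deleteEdges {s(i, v)}).Reachable i x}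

lemma notMem_farSide_self : i ∉ G.farSide i v := fun h => h .rfl

lemma eq_of_adj_of_mem_farSide_of_notMem (hxy : G.Adj x y) (hx : x ∈ G.farSide i v)
    (hy : y ∉ G.farSide i v) : x = v ∧ y = i := by
  by_cases he : s(x, y) = s(i, v)
  · rcases Sym2.eq_iff.mp he with ⟨rfl, -⟩ | hxy
    · exact absurd hx notMem_farSide_self
    · exact hxy
  · refine absurd ((not_not.mp hy).trans (Adj.reachable ?_)) hx
    rw [deleteEdges_adj, Set.mem_singleton_iff, Sym2.eq_swap]
    exact ⟨hxy.symm, he⟩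

lemma eq_of_graphSquare_adj_of_mem_farSide_of_notMem (hxy : (GraphSquare G).Adj x y)
    (hx : x ∈ G.farSide i v) (hy : y ∉ G.farSide i v) : x = v ∨ y = i := by
  obtain ⟨-, hxy | ⟨w, hxw, hwy⟩⟩ := hxy
  · exact .inl (eq_of_adj_of_mem_farSide_of_notMem hxy hx hy).1
  · by_cases hw : w ∈ G.farSide i v
    · exact .inr (eq_of_adj_of_mem_farSide_of_notMem hwy hw hy).2
    · exact .inl (eq_of_adj_of_mem_farSide_of_notMem hxw hx hw).1

lemma exists_ne_mem_farSide (hb : G.IsBridge s(i, v)) (hiv : G.Adj i v)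
    (hv : ¬ IsLeafVertex G v) : ∃ w ∈ G.farSide i v, w ≠ v := by
  obtain ⟨w, hvw, hwi⟩ : ∃ w, G.Adj v w ∧ w ≠ i := by
    by_contra! h
    exact hv ⟨i, hiv.symm, h⟩
  refine ⟨w, fun hw => hwi ?_, hvw.ne'⟩
  exact (eq_of_adj_of_mem_farSide_of_notMem hvw (isBridge_iff.mp hb) (not_not.mpr hw)).2

lemma disjoint_farSide (hG : G.Preconnected) {v' : V} (hvv' : v ≠ v') :
    Disjoint (G.farSide i v) (G.farSide i v') := by
  classical
  refine Set.disjoint_left.mpr fun x hx hx' => hvv' ?_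
  let p := (hG i x).some.toPath
  have hmem : ∀ u, x ∈ G.farSide i u → p.1.toSubgraph.Adj i u := fun u hu => by
    rw [Walk.adj_toSubgraph_iff_mem_edges]
    by_contra h
    exact hu (reachable_deleteEdges_iff_exists_walk.mpr ⟨p, h⟩)
  have hnil : ¬ p.1.Nil := Walk.not_nil_of_ne fun h => notMem_farSide_self (h ▸ hx)
  have hnbr := p.2.neighborSet_toSubgraph_startpoint hnil
  have h₁ : v ∈ p.1.toSubgraph.neighborSet i := hmem v hx
  have h₂ : v' ∈ p.1.toSubgraph.neighborSet i := hmem v' hx'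
  rw [hnbr] at h₁ h₂
  exact h₁.trans h₂.symm

lemma Walk.IsCycle.exists_toSubgraph_adj_mem {S : Set V} {w : V} {c : H.Walk i i}
    (hc : c.IsCycle) (hw : w ∈ c.support) (hwS : w ∈ S) (hiS : i ∉ S) (hwv : w ≠ v)
    (hgate : ∀ x y, H.Adj x y → x ∈ S → y ∉ S → x = v ∨ y = i) :
    ∃ z ∈ S, c.toSubgraph.Adj i z := by
  classical
  -- Otherwise both arcs of the cycle between `i` and `w` leave `S` through `v`, visiting it twice.
  by_contra! hno
  set p := c.takeUntil w hw
  set q := c.dropUntil w hw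
  have hdarts : ∀ d ∈ p.darts ++ q.darts, c.toSubgraph.Adj d.fst d.snd := fun d hd => by
    rw [← Walk.darts_append, Walk.take_spec] at hd
    exact Walk.adj_toSubgraph_iff_mem_edges.mpr (c.edges_eq_map_darts ▸ List.mem_map_of_mem hd)
  obtain ⟨d, hd, hdi, hdw⟩ := p.exists_boundary_dart Sᶜ hiS (not_not.mpr hwS)
  obtain ⟨e, he, hew, hei⟩ := q.exists_boundary_dart S hwS hiS
  have hvp : v ∈ p.support.tail := by
    obtain hv | hi := hgate _ _ d.adj.symm (not_not.mp hdw) hdi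
    · exact hv ▸ p.map_snd_darts ▸ List.mem_map_of_mem hd
    · exact absurd (hi ▸ hdarts d (List.mem_append_left _ hd)) (hno _ (not_not.mp hdw))
  have hvq : v ∈ q.support.tail := by
    obtain hv | hi := hgate _ _ e.adj hew hei
    · have := hv ▸ q.dart_fst_mem_support_of_mem_darts he
      rw [← q.cons_tail_support] at this
      exact (List.mem_cons.mp this).resolve_left (Ne.symm (hv ▸ hwv))
    · exact absurd (hi ▸ hdarts e (List.mem_append_right _ he)).symm (hno _ hew)
  have hnodup := hc.support_nodup
  rw [← c.take_spec hw, Walk.support_append, List.tail_append_of_ne_nil p.support_ne_nil] at hnodup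
  exact List.disjoint_of_nodup_append hnodup hvp hvq

lemma exists_toSubgraph_adj_mem_farSide (hG : G.Connected) {c : (GraphSquare G).Walk i i}
    (hc : c.IsCycle) (hsupp : ∀ w, w ∈ c.support) (hv : IsNontrivialBridge G i v) :
    ∃ z ∈ G.farSide i v, c.toSubgraph.Adj i z := by
  have hiv : G.Adj i v := hv.1.reachable_iff_adj.mp (hG.preconnected i v)
  obtain ⟨w, hwS, hwv⟩ := exists_ne_mem_farSide hv.1 hiv hv.2.2
  exact hc.exists_toSubgraph_adj_mem (hsupp w) hwS notMem_farSide_self hwv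
    fun _ _ hxy hx hy => eq_of_graphSquare_adj_of_mem_farSide_of_notMem hxy hx hy

end SimpleGraph

theorem square_not_hamiltonian_of_three_nontrivial_bridges_general
    (G : SimpleGraph V) (hG : G.Connected) (i : V) (h : 3 ≤ bn G i) :
    ¬ HasHamiltonianCycle (GraphSquare G) := by
  intro hH
  obtain ⟨c, hc, hsupp⟩ := hH.exists_isCycle i
  obtain ⟨v₁, hv₁, v₂, hv₂, v₃, hv₃, h₁₂, h₁₃, h₂₃⟩ :=
    (Set.two_lt_ncard (Set.finite_of_ncard_pos (by unfold bn at h; omega))).mp h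
  obtain ⟨z₁, hz₁, hiz₁⟩ := exists_toSubgraph_adj_mem_farSide hG hc hsupp hv₁
  obtain ⟨z₂, hz₂, hiz₂⟩ := exists_toSubgraph_adj_mem_farSide hG hc hsupp hv₂
  obtain ⟨z₃, hz₃, hiz₃⟩ := exists_toSubgraph_adj_mem_farSide hG hc hsupp hv₃
  have hne {v v' z z' : V} (hvv' : v ≠ v') (hz : z ∈ G.farSide i v) (hz' : z' ∈ G.farSide i v') :
      z ≠ z' := (disjoint_farSide hG.preconnected hvv').ne_of_mem hz hz'
  have htwo := hc.ncard_neighborSet_toSubgraph_eq_two c.start_mem_support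
  have hthree : 2 < (c.toSubgraph.neighborSet i).ncard :=
    (Set.two_lt_ncard_iff (Set.finite_of_ncard_pos (by omega))).mpr
      ⟨z₁, z₂, z₃, hiz₁, hiz₂, hiz₃, hne h₁₂ hz₁ hz₂, hne h₁₃ hz₁ hz₃, hne h₂₃ hz₂ hz₃⟩
  omega

/-- If a connected graph `G` has a vertex incident with at least three nontrivial bridges,
then `G²` is not hamiltonian. -/
theorem square_not_hamiltonian_of_three_nontrivial_bridges [Fintype V]
    (G : SimpleGraph V) (hG : G.Connected) (i : V) (h : 3 ≤ bn G i) :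
    ¬ HasHamiltonianCycle (GraphSquare G) :=
  square_not_hamiltonian_of_three_nontrivial_bridges_general G hG i h
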